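/- Let G be a digraph with its natural quasi-metric d_G. The linear map φ_n: A_n(G;R) → C^M_{n,n}(G;R) sending the allowed path e_{v_0,…,v_n} to the tuple ⟨v_0,…,v_n⟩ is an isomorphism of R-modules, and it restricts to an isomorphism Ω_n(G;R) ≅ ker(∂^M_{n,n}) = H^M_{n,n}(G;R) between the path chain module and the diagonal magnitude homology. -/

import Mathlib

open Finsupp

/-- `p` is an allowed `d`-path in the digraph `(V, E)`: consecutive vertices are joined by
edges. -/
def IsAllowed (V : Type) (E : V → V → Prop) (d : ℕ) (p : Fin (d+1) → V) : Prop :=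
  ∀ i : Fin d, E (p i.castSucc) (p i.succ)

/-- An allowed path condition for tuples of length `d` (i.e. `(d-1)`-paths). -/
def IsAllowedLow (V : Type) (E : V → V → Prop) (d : ℕ) (q : Fin d → V) : Prop :=
  ∀ j : Fin (d-1), E (q ⟨j.val, by have := j.isLt; omega⟩) (q ⟨j.val+1, by have := j.isLt; omega⟩)

/-- Regularity (no repeated consecutive vertices) for tuples of length `d`. -/
def IsRegularLow (V : Type) (d : ℕ) (q : Fin d → V) : Prop :=
  ∀ j : Fin (d-1), q ⟨j.val, by have := j.isLt; omega⟩ ≠ q ⟨j.val+1, by have := j.isLt; omega⟩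

open Classical in
/-- The path differential `∂^P_d` on the regular path complex: the alternating sum of the
face maps deleting the `i`-th vertex, where a face is declared zero if the resulting path
is irregular. -/
noncomputable def pathBoundary (V : Type) (R : Type) [CommRing R] (d : ℕ) :
    ((Fin (d+1) → V) →₀ R) →ₗ[R] ((Fin d → V) →₀ R) :=
  ∑ i : Fin (d+1), ((-1 : R)^(i : ℕ)) •
    ((Finsupp.lsum R fun p : Fin (d+1) → V =>
      if IsRegularLow V d (p ∘ i.succAbove) then Finsupp.lsingle (p ∘ i.succAbove)
      else (0 : R →ₗ[R] ((Fin d → V) →₀ R))) : ((Fin (d+1) → V) →₀ R) →ₗ[R] ((Fin d → V) →₀ R))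

/-- The path chain module `Ω_d(G;R)`: allowed `d`-chains whose path boundary is again an
allowed chain. -/
noncomputable def Omega (V : Type) (E : V → V → Prop) (R : Type) [CommRing R] (d : ℕ) :
    Submodule R ((Fin (d+1) → V) →₀ R) :=
  Finsupp.supported R R {p | IsAllowed V E d p} ⊓
    Submodule.comap (pathBoundary V R d) (Finsupp.supported R R {q | IsAllowedLow V E d q})

/-- The natural quasi-metric of a digraph: the minimal length of an allowed path from `u`
to `w`, and `∞` if there is no such path. -/
noncomputable def dG (V : Type) (E : V → V → Prop) (u w : V) : ℕ∞ :=
  sInf {m : ℕ∞ | ∃ n : ℕ, m = n ∧ ∃ p : Fin (n+1) → V,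
    p 0 = u ∧ p (Fin.last n) = w ∧ IsAllowed V E n p}

open Classical in
/-- The partial magnitude differential `∂^M_{d,d,i+1}` (deleting the interior vertex at
position `i+1`) on diagonal magnitude chains, identified with spans of tuples: the vertex is
deleted when the triangle inequality is an equality, otherwise the tuple is sent to `0`. -/
noncomputable def magFace (V : Type) (E : V → V → Prop) (R : Type) [CommRing R]
    (d : ℕ) (i : Fin (d-1)) :
    ((Fin (d+1) → V) →₀ R) →ₗ[R] ((Fin d → V) →₀ R) :=
  Finsupp.lsum R fun p : Fin (d+1) → V =>
    if dG V E (p ⟨i.val, by have := i.isLt; omega⟩) (p ⟨i.val+1, by have := i.isLt; omega⟩)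
        + dG V E (p ⟨i.val+1, by have := i.isLt; omega⟩) (p ⟨i.val+2, by have := i.isLt; omega⟩)
        = dG V E (p ⟨i.val, by have := i.isLt; omega⟩) (p ⟨i.val+2, by have := i.isLt; omega⟩)
    then Finsupp.lsingle (p ∘ Fin.succAbove ⟨i.val+1, by have := i.isLt; omega⟩)
    else (0 : R →ₗ[R] ((Fin d → V) →₀ R))

/-! ### Auxiliary lemmas -/

section Aux

variable {V : Type} {E : V → V → Prop}

lemma dG_self (u : V) : dG V E u u = 0 :=
  le_antisymm (sInf_le ⟨0, rfl, fun _ => u, rfl, rfl, fun i => i.elim0⟩) zero_le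

lemma dG_le_one (u w : V) (h : E u w) : dG V E u w ≤ 1 := by
  refine sInf_le ⟨1, rfl, ![u, w], rfl, rfl, ?_⟩
  intro i; fin_cases i <;> simpa

lemma dG_le_two (u v w : V) (h1 : E u v) (h2 : E v w) : dG V E u w ≤ 2 := by
  refine sInf_le ⟨2, rfl, ![u, v, w], rfl, rfl, ?_⟩
  intro i; fin_cases i <;> simpa

lemma one_le_dG (u w : V) (h : u ≠ w) : 1 ≤ dG V E u w := by
  refine le_sInf ?_
  rintro m ⟨n, rfl, p, hp0, hpl, hpa⟩
  rcases n with _ | n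
  · exact (h (hp0.symm.trans hpl)).elim
  · exact_mod_cast Nat.one_le_iff_ne_zero.2 (Nat.succ_ne_zero n)

lemma dG_eq_one_iff (hirr : ∀ u v, E u v → u ≠ v) (u w : V) :
    dG V E u w = 1 ↔ E u w := by
  constructor
  · intro h
    have h2 : dG V E u w < 2 := by rw [h]; norm_num
    rw [dG, sInf_lt_iff] at h2
    obtain ⟨m, ⟨n, rfl, p, hp0, hpl, hpa⟩, hm⟩ := h2
    have hn : n < 2 := by exact_mod_cast hm
    interval_cases n
    · exfalso
      have : u = w := hp0.symm.trans hpl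
      rw [this, dG_self] at h
      exact absurd h (by norm_num)
    · have := hpa 0
      simp only [show (0 : Fin 1).castSucc = 0 from rfl,
        show (0 : Fin 1).succ = Fin.last 1 from rfl] at this
      rwa [hp0, hpl] at this
  · intro h
    exact le_antisymm (dG_le_one u w h) (one_le_dG u w (hirr u w h))

lemma dG_eq_two (hirr : ∀ u v, E u v → u ≠ v) (u v w : V) (h1 : E u v) (h2 : E v w)
    (hne : u ≠ w) (hnE : ¬ E u w) : dG V E u w = 2 := by
  have hle := dG_le_two (E := E) u v w h1 h2
  have h1' := one_le_dG (E := E) u w hne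
  have hne1 : dG V E u w ≠ 1 := fun h => hnE ((dG_eq_one_iff hirr u w).1 h)
  have hnetop : dG V E u w ≠ ⊤ := by
    intro h; rw [h] at hle; exact absurd hle (by norm_num)
  lift dG V E u w to ℕ using hnetop with m hm
  have : m ≤ 2 := by exact_mod_cast hle
  have : 1 ≤ m := by exact_mod_cast h1'
  have : m ≠ 1 := fun h => hne1 (by rw [h]; rfl)
  norm_cast
  omega

lemma setEq (hirr : ∀ u v, E u v → u ≠ v) (d : ℕ) :
    {p : Fin (d+1) → V | IsAllowed V E d p} =
    {p : Fin (d+1) → V | (∀ i : Fin d, p i.castSucc ≠ p i.succ) ∧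
        (∑ i : Fin d, dG V E (p i.castSucc) (p i.succ)) = (d : ℕ∞)} := by
  ext p
  simp only [Set.mem_setOf_eq]
  constructor
  · intro hp
    refine ⟨fun i => hirr _ _ (hp i), ?_⟩
    have : ∀ i : Fin d, dG V E (p i.castSucc) (p i.succ) = 1 :=
      fun i => (dG_eq_one_iff hirr _ _).2 (hp i)
    simp [this]
  · rintro ⟨hreg, hsum⟩
    intro j
    have hterm1 : ∀ i : Fin d, 1 ≤ dG V E (p i.castSucc) (p i.succ) :=
      fun i => one_le_dG _ _ (hreg i)
    have hcard : (Finset.univ.erase j).card = d - 1 := by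
      rw [Finset.card_erase_of_mem (Finset.mem_univ j)]
      simp
    have herase : ((d - 1 : ℕ) : ℕ∞) ≤ ∑ i ∈ Finset.univ.erase j, dG V E (p i.castSucc) (p i.succ) := by
      calc ((d-1:ℕ) : ℕ∞) = ∑ _i ∈ Finset.univ.erase j, (1 : ℕ∞) := by simp [hcard]
        _ ≤ _ := Finset.sum_le_sum (fun i _ => hterm1 i)
    have hsplit := Finset.add_sum_erase Finset.univ
      (fun i : Fin d => dG V E (p i.castSucc) (p i.succ)) (Finset.mem_univ j)
    have hle : dG V E (p j.castSucc) (p j.succ) + ((d-1:ℕ):ℕ∞) ≤ 1 + ((d-1:ℕ):ℕ∞) := by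
      calc dG V E (p j.castSucc) (p j.succ) + ((d-1:ℕ):ℕ∞)
          ≤ dG V E (p j.castSucc) (p j.succ)
            + ∑ i ∈ Finset.univ.erase j, dG V E (p i.castSucc) (p i.succ) :=
            add_le_add le_rfl herase
        _ = (d : ℕ∞) := by rw [hsplit, hsum]
        _ = 1 + ((d-1:ℕ):ℕ∞) := by
            have hd : d = 1 + (d-1) := by have := j.isLt; omega
            conv_lhs => rw [hd]
            push_cast [Nat.cast_add]
            rfl
    have := (WithTop.add_le_add_iff_right
      (z := ((d-1:ℕ):ℕ∞)) (by exact_mod_cast WithTop.coe_ne_top)).1 hle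
    exact (dG_eq_one_iff hirr _ _).1 (le_antisymm this (hterm1 j))

open Classical in
noncomputable def projNA (V : Type) (E : V → V → Prop) (R : Type) [CommRing R] (d : ℕ) :
    ((Fin d → V) →₀ R) →ₗ[R] ((Fin d → V) →₀ R) :=
  Finsupp.lsum R fun q => if IsAllowedLow V E d q then (0 : R →ₗ[R] _) else Finsupp.lsingle q

variable {R : Type} [CommRing R] {d : ℕ}

open Classical in
lemma projNA_apply (y : (Fin d → V) →₀ R) (q : Fin d → V) :
    projNA V E R d y q = if IsAllowedLow V E d q then 0 else y q := by
  classical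
  rw [projNA, Finsupp.lsum_apply, Finsupp.sum_apply, Finsupp.sum]
  by_cases hq : IsAllowedLow V E d q
  · rw [if_pos hq]
    refine Finset.sum_eq_zero fun q' _ => ?_
    by_cases h' : IsAllowedLow V E d q'
    · simp [h']
    · rw [if_neg h']
      simp only [Finsupp.lsingle_apply]
      rw [Finsupp.single_apply, if_neg]
      intro h; exact h' (h ▸ hq)
  · rw [if_neg hq]
    rcases eq_or_ne (y q) 0 with h0 | h0
    · rw [h0]
      refine Finset.sum_eq_zero fun q' hq' => ?_
      by_cases h' : IsAllowedLow V E d q'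
      · simp [h']
      · rw [if_neg h']
        simp only [Finsupp.lsingle_apply]
        rw [Finsupp.single_apply, if_neg]
        rintro rfl
        exact absurd h0 (Finsupp.mem_support_iff.1 hq')
    · rw [Finset.sum_eq_single (M:=R) q]
      · rw [if_neg hq]; simp
      · intro q' _ hne
        by_cases h' : IsAllowedLow V E d q'
        · simp [h']
        · rw [if_neg h']
          simp only [Finsupp.lsingle_apply]
          rw [Finsupp.single_apply, if_neg hne]
      · intro h
        exact absurd (Finsupp.notMem_support_iff.1 h) h0

lemma mem_supported_iff_projNA (y : (Fin d → V) →₀ R) :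
    y ∈ Finsupp.supported R R {q : Fin d → V | IsAllowedLow V E d q} ↔ projNA V E R d y = 0 := by
  constructor
  · intro hy
    ext q
    rw [projNA_apply]
    by_cases hq : IsAllowedLow V E d q
    · simp [hq]
    · rw [if_neg hq]
      simp only [Finsupp.coe_zero, Pi.zero_apply]
      by_contra h
      exact hq (hy (Finsupp.mem_support_iff.2 h))
  · intro h q hq
    by_contra hq'
    have := projNA_apply (E := E) y q
    rw [h, if_neg (show ¬ IsAllowedLow V E d q from hq')] at this
    exact absurd this.symm (Finsupp.mem_support_iff.1 hq)

lemma succAbove_val (i : Fin (d+1)) (k : Fin d) :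
    ((i.succAbove k) : ℕ) = if k.val < i.val then k.val else k.val+1 := by
  rw [Fin.succAbove]
  by_cases h : k.val < i.val
  · rw [if_pos (show k.castSucc < i from by rwa [Fin.lt_def]), if_pos h]; rfl
  · rw [if_neg (show ¬ k.castSucc < i from by rwa [Fin.lt_def]), if_neg h]; rfl

lemma face_apply (p : Fin (d+1) → V) (i : Fin (d+1)) (k : Fin d) :
    (p ∘ i.succAbove) k = if h : k.val < i.val then p ⟨k.val, by omega⟩
      else p ⟨k.val+1, by have := k.isLt; omega⟩ := by
  simp only [Function.comp_apply]
  by_cases h : k.val < i.val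
  · rw [dif_pos h]; congr 1; exact Fin.ext (by rw [succAbove_val, if_pos h])
  · rw [dif_neg h]; congr 1; exact Fin.ext (by rw [succAbove_val, if_neg h])

lemma allowed_edge {p : Fin (d+1) → V} (hp : IsAllowed V E d p) (a : ℕ) (ha : a < d) :
    E (p ⟨a, by omega⟩) (p ⟨a+1, by omega⟩) := by
  have := hp ⟨a, ha⟩
  simpa [Fin.castSucc_mk, Fin.succ_mk] using this

lemma face_allowed_end {p : Fin (d+1) → V} (hp : IsAllowed V E d p) (i : Fin (d+1))
    (hi : i.val = 0 ∨ i.val = d) : IsAllowedLow V E d (p ∘ i.succAbove) := by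
  intro m
  have hm := m.isLt
  rw [face_apply, face_apply]
  rcases hi with hi | hi
  · rw [dif_neg (by simp only [Fin.val_mk]; omega), dif_neg (by simp only [Fin.val_mk]; omega)]
    exact allowed_edge hp (m.val+1) (by omega)
  · rw [dif_pos (by simp only [Fin.val_mk]; omega), dif_pos (by simp only [Fin.val_mk]; omega)]
    exact allowed_edge hp m.val (by omega)

lemma face_allowed_interior {p : Fin (d+1) → V} (hp : IsAllowed V E d p)
    (j : ℕ) (hj : j < d - 1) :
    IsAllowedLow V E d (p ∘ (⟨j+1, by omega⟩ : Fin (d+1)).succAbove) ↔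
      E (p ⟨j, by omega⟩) (p ⟨j+2, by omega⟩) := by
  constructor
  · intro h
    have := h ⟨j, hj⟩
    rw [face_apply, face_apply, dif_pos (by simp only [Fin.val_mk]; omega), dif_neg (by simp only [Fin.val_mk]; omega)] at this
    exact this
  · intro h m
    have hm := m.isLt
    rw [face_apply, face_apply]
    rcases lt_trichotomy m.val j with hc | hc | hc
    · rw [dif_pos (by simp only [Fin.val_mk]; omega), dif_pos (by simp only [Fin.val_mk]; omega)]
      exact allowed_edge hp m.val (by omega)
    · subst hc
      rw [dif_pos (by simp only [Fin.val_mk]; omega), dif_neg (by simp only [Fin.val_mk]; omega)]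
      exact h
    · rw [dif_neg (by simp only [Fin.val_mk]; omega), dif_neg (by simp only [Fin.val_mk]; omega)]
      exact allowed_edge hp (m.val+1) (by omega)

lemma face_regular_interior (hirr : ∀ u v, E u v → u ≠ v) {p : Fin (d+1) → V}
    (hp : IsAllowed V E d p) (j : ℕ) (hj : j < d - 1) :
    IsRegularLow V d (p ∘ (⟨j+1, by omega⟩ : Fin (d+1)).succAbove) ↔
      p ⟨j, by omega⟩ ≠ p ⟨j+2, by omega⟩ := by
  constructor
  · intro h
    have := h ⟨j, hj⟩
    rw [face_apply, face_apply, dif_pos (by simp only [Fin.val_mk]; omega), dif_neg (by simp only [Fin.val_mk]; omega)] at this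
    exact this
  · intro h m
    have hm := m.isLt
    rw [face_apply, face_apply]
    rcases lt_trichotomy m.val j with hc | hc | hc
    · rw [dif_pos (by simp only [Fin.val_mk]; omega), dif_pos (by simp only [Fin.val_mk]; omega)]
      exact hirr _ _ (allowed_edge hp m.val (by omega))
    · subst hc
      rw [dif_pos (by simp only [Fin.val_mk]; omega), dif_neg (by simp only [Fin.val_mk]; omega)]
      exact h
    · rw [dif_neg (by simp only [Fin.val_mk]; omega), dif_neg (by simp only [Fin.val_mk]; omega)]
      exact hirr _ _ (allowed_edge hp (m.val+1) (by omega))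

end Aux

open Classical in
lemma key (V : Type) (E : V → V → Prop) (hirr : ∀ u v, E u v → u ≠ v)
    (R : Type) [CommRing R] (d : ℕ) :
    ∀ x ∈ Finsupp.supported R R {p : Fin (d+1) → V | IsAllowed V E d p},
      projNA V E R d (pathBoundary V R d x) =
        (∑ i : Fin (d-1), ((-1 : R)^((i : ℕ)+1)) • magFace V E R d i) x := by
  intro x hx
  rw [Finsupp.supported_eq_span_single] at hx
  induction hx using Submodule.span_induction with
  | zero => simp
  | add y z _ _ hy hz => rw [map_add, map_add, map_add, hy, hz]
  | smul r y _ hy => rw [map_smul, map_smul, map_smul, hy]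
  | mem y hy =>
    obtain ⟨p, hp, rfl⟩ := hy
    simp only [Set.mem_setOf_eq] at hp
    -- evaluate both sides on the single generator
    rw [pathBoundary, LinearMap.sum_apply, map_sum, LinearMap.sum_apply]
    -- termwise sums
    have hLHS : ∀ i : Fin (d+1),
        projNA V E R d ((((-1:R)^(i:ℕ)) • ((Finsupp.lsum R fun p : Fin (d+1) → V =>
          if IsRegularLow V d (p ∘ i.succAbove) then Finsupp.lsingle (p ∘ i.succAbove)
          else (0 : R →ₗ[R] ((Fin d → V) →₀ R)))) : ((Fin (d+1) → V) →₀ R) →ₗ[R] _)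
            (Finsupp.single p 1)) =
        ((-1:R)^(i:ℕ)) • (if IsRegularLow V d (p ∘ i.succAbove) then
          (if IsAllowedLow V E d (p ∘ i.succAbove) then 0
            else Finsupp.single (p ∘ i.succAbove) (1:R)) else 0) := by
      intro i
      rw [LinearMap.smul_apply, Finsupp.lsum_single, map_smul]
      congr 1
      by_cases hreg : IsRegularLow V d (p ∘ i.succAbove)
      · rw [if_pos hreg, if_pos hreg]
        simp only [Finsupp.lsingle_apply]
        rw [projNA, Finsupp.lsum_single]
        by_cases hall : IsAllowedLow V E d (p ∘ i.succAbove)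
        · rw [if_pos hall, if_pos hall]; rfl
        · rw [if_neg hall, if_neg hall]; rfl
      · rw [if_neg hreg, if_neg hreg]
        simp
    refine Eq.trans (Finset.sum_congr rfl fun i _ => hLHS i) ?_
    have hd := Nat.sub_le d 1
    have hinj : Function.Injective
        (fun j : Fin (d-1) => (⟨j.val+1, by have := j.isLt; omega⟩ : Fin (d+1))) := by
        intro a b hab
        have := congrArg Fin.val hab
        simp only [Fin.val_mk] at this
        exact Fin.ext (by omega)
    set emb : Fin (d-1) ↪ Fin (d+1) :=
      ⟨fun j => ⟨j.val+1, by have := j.isLt; omega⟩, hinj⟩ with hemb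
    refine Eq.trans (Finset.sum_subset (Finset.subset_univ (Finset.univ.map emb)) ?_).symm ?_
    · intro i _ hi
      have hi0 : i.val = 0 ∨ i.val = d := by
        by_contra hco
        push_neg at hco
        refine hi (Finset.mem_map.2 ⟨⟨i.val - 1, by have := i.isLt; omega⟩, Finset.mem_univ _, ?_⟩)
        refine Fin.ext ?_
        simp only [hemb, Function.Embedding.coeFn_mk, Fin.val_mk]
        have := i.isLt
        omega
      have hall := face_allowed_end hp i hi0
      by_cases hreg : IsRegularLow V d (p ∘ i.succAbove)
      · rw [if_pos hreg, if_pos hall, smul_zero]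
      · rw [if_neg hreg, smul_zero]
    · rw [Finset.sum_map]
      refine Finset.sum_congr rfl fun j _ => ?_
      have hj := j.isLt
      have e1 : E (p ⟨j.val, by omega⟩) (p ⟨j.val+1, by omega⟩) :=
        allowed_edge hp j.val (by omega)
      have e2 : E (p ⟨j.val+1, by omega⟩) (p ⟨j.val+2, by omega⟩) :=
        allowed_edge hp (j.val+1) (by omega)
      have d1 := (dG_eq_one_iff hirr _ _).2 e1
      have d2 := (dG_eq_one_iff hirr _ _).2 e2
      rw [LinearMap.smul_apply, magFace, Finsupp.lsum_single]
      simp only [hemb, Function.Embedding.coeFn_mk]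
      by_cases hN : p ⟨j.val, by omega⟩ = (p ⟨j.val+2, by omega⟩ : V)
      · -- degenerate: condition false, regularity false
        have d0 : dG V E (p ⟨j.val, by omega⟩) (p ⟨j.val+2, by omega⟩) = 0 := by
          rw [hN]; exact dG_self _
        have hc : ¬ (dG V E (p ⟨j.val, by omega⟩) (p ⟨j.val+1, by omega⟩)
            + dG V E (p ⟨j.val+1, by omega⟩) (p ⟨j.val+2, by omega⟩)
            = dG V E (p ⟨j.val, by omega⟩) (p ⟨j.val+2, by omega⟩)) := by
          rw [d1, d2, d0]
          norm_num
        have hnreg : ¬ IsRegularLow V d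
            (p ∘ (⟨j.val+1, by omega⟩ : Fin (d+1)).succAbove) := fun hr =>
          ((face_regular_interior hirr hp j.val (by omega)).1 hr) hN
        rw [if_neg hnreg, smul_zero, if_neg hc, LinearMap.zero_apply, smul_zero]
      · by_cases hE : E (p ⟨j.val, by omega⟩) (p ⟨j.val+2, by omega⟩)
        · -- allowed face: condition false (dG = 1), projected to 0
          have hc : ¬ (dG V E (p ⟨j.val, by omega⟩) (p ⟨j.val+1, by omega⟩)
              + dG V E (p ⟨j.val+1, by omega⟩) (p ⟨j.val+2, by omega⟩)
              = dG V E (p ⟨j.val, by omega⟩) (p ⟨j.val+2, by omega⟩)) := by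
            rw [d1, d2, (dG_eq_one_iff hirr _ _).2 hE]
            norm_num
          have hall : IsAllowedLow V E d
              (p ∘ (⟨j.val+1, by omega⟩ : Fin (d+1)).succAbove) :=
            (face_allowed_interior hp j.val (by omega)).2 hE
          rw [if_neg hc, LinearMap.zero_apply, smul_zero]
          by_cases hreg : IsRegularLow V d (p ∘ (⟨j.val+1, by omega⟩ : Fin (d+1)).succAbove)
          · rw [if_pos hreg, if_pos hall, smul_zero]
          · rw [if_neg hreg, smul_zero]
        · -- genuine magnitude face
          have hc : dG V E (p ⟨j.val, by omega⟩) (p ⟨j.val+1, by omega⟩)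
              + dG V E (p ⟨j.val+1, by omega⟩) (p ⟨j.val+2, by omega⟩)
              = dG V E (p ⟨j.val, by omega⟩) (p ⟨j.val+2, by omega⟩) := by
            rw [d1, d2, dG_eq_two hirr _ _ _ e1 e2 hN hE]
            rfl
          have hreg : IsRegularLow V d
              (p ∘ (⟨j.val+1, by omega⟩ : Fin (d+1)).succAbove) :=
            (face_regular_interior hirr hp j.val (by omega)).2 hN
          have hall : ¬ IsAllowedLow V E d
              (p ∘ (⟨j.val+1, by omega⟩ : Fin (d+1)).succAbove) := fun h =>
            hE ((face_allowed_interior hp j.val (by omega)).1 h)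
          rw [if_pos hc, if_pos hreg, if_neg hall, Finsupp.lsingle_apply]

/-- The map `φ_d` identifying allowed `d`-paths with diagonal magnitude
`d`-tuples is an isomorphism of `R`-modules (here expressed as an equality of the submodule
of allowed chains with the module `C^M_{d,d}` of magnitude chains of bidegree `(d,d)`), and
it restricts to an isomorphism between the path chain module `Ω_d(G;R)` and the diagonal
magnitude homology `H^M_{d,d}(G;R) = ker ∂^M_{d,d}`. -/

theorem allowed_eq_magnitude_and_Omega_eq_ker (V : Type) (E : V → V → Prop)
    (hirr : ∀ u v, E u v → u ≠ v) (R : Type) [CommRing R] (d : ℕ) :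
    (Finsupp.supported R R {p : Fin (d+1) → V | IsAllowed V E d p} =
      Finsupp.supported R R {p : Fin (d+1) → V |
        (∀ i : Fin d, p i.castSucc ≠ p i.succ) ∧
        (∑ i : Fin d, dG V E (p i.castSucc) (p i.succ)) = (d : ℕ∞)}) ∧
    (∀ x ∈ Finsupp.supported R R {p : Fin (d+1) → V | IsAllowed V E d p},
      x ∈ Omega V E R d ↔
        (∑ i : Fin (d-1), ((-1 : R)^((i : ℕ)+1)) • magFace V E R d i) x = 0) := by
  constructor
  · exact congrArg (Finsupp.supported R R) (setEq hirr d)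
  · intro x hx
    rw [Omega, Submodule.mem_inf, Submodule.mem_comap, ← key V E hirr R d x hx]
    constructor
    · intro h
      exact (mem_supported_iff_projNA _).1 h.2
    · intro h
      exact ⟨hx, (mem_supported_iff_projNA _).2 h⟩
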